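/- arXiv:2101.05396 — 7 statements merged into one kernel-verified Lean document; each statement's English description precedes it below -/
import Mathlib

section
/- Let T : [0, t_f] → ℝ be continuous and positive, and suppose Σ : [0, t_f] → ℝ is continuous, positive, and satisfies the integral constraint ∫₀^{t_f} T(t)/Σ(t) dt = m·t_f/k_B (with constants m, k_B, γ > 0). Then the power functional P(Σ) = (γ/t_f)·∫₀^{t_f} (k_B·T(t)/m − Σ(t)) dt satisfies P(Σ) ≤ (γ·k_B/m)·Var(√T), where Var(√T) = (1/t_f)∫₀^{t_f} T dt − ((1/t_f)∫₀^{t_f} √T dt)². -/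
/-!
By Cauchy–Schwarz, `(∫ √T)² = (∫ √(T/Σ) · √Σ)² ≤ (∫ T/Σ) (∫ Σ) = (m t_f / k_B) ∫ Σ`, so the
constraint forces `∫ Σ ≥ k_B (∫ √T)² / (m t_f)`; inserting this lower bound on `∫ Σ` into `P(Σ)`
gives the variance bound.
-/

open MeasureTheory

theorem sq_integral_le_integral_sq_div_mul_integral {α : Type*} [MeasurableSpace α]
    {μ : Measure α} {u v : α → ℝ} (hv : ∀ᵐ x ∂μ, 0 < v x) (hu : Integrable u μ)
    (huv : Integrable (fun x ↦ u x ^ 2 / v x) μ) (hvi : Integrable v μ) :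
    (∫ x, u x ∂μ) ^ 2 ≤ (∫ x, u x ^ 2 / v x ∂μ) * ∫ x, v x ∂μ := by
  -- `u²/v - 2lu + l²v = (u - lv)²/v ≥ 0`: integrating gives a nonnegative quadratic in `l`.
  have hquad : ∀ l : ℝ, 0 ≤ (∫ x, v x ∂μ) * (l * l) + (-2 * ∫ x, u x ∂μ) * l
      + ∫ x, u x ^ 2 / v x ∂μ := by
    intro l
    have hint : ∫ x, (u x ^ 2 / v x - 2 * l * u x + l ^ 2 * v x) ∂μ
        = (∫ x, v x ∂μ) * (l * l) + (-2 * ∫ x, u x ∂μ) * l + ∫ x, u x ^ 2 / v x ∂μ := by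
      rw [integral_add, integral_sub huv (hu.const_mul _), integral_const_mul,
        integral_const_mul]
      · ring
      exacts [huv.sub (hu.const_mul _), hvi.const_mul _]
    rw [← hint]
    refine integral_nonneg_of_ae (hv.mono fun x hx ↦ ?_)
    have hsq : u x ^ 2 / v x - 2 * l * u x + l ^ 2 * v x = (u x - l * v x) ^ 2 / v x := by
      field_simp
      ring
    simp only [Pi.zero_apply, hsq]
    positivity
  have hdisc := discrim_le_zero hquad
  rw [discrim] at hdisc
  linarith

theorem sq_intervalIntegral_le_integral_sq_div_mul_integral {a b : ℝ} (hab : a ≤ b)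
    {u v : ℝ → ℝ} (hv : ∀ x ∈ Set.Ioc a b, 0 < v x) (hu : IntervalIntegrable u volume a b)
    (huv : IntervalIntegrable (fun x ↦ u x ^ 2 / v x) volume a b)
    (hvi : IntervalIntegrable v volume a b) :
    (∫ x in a..b, u x) ^ 2 ≤ (∫ x in a..b, u x ^ 2 / v x) * ∫ x in a..b, v x := by
  simp only [intervalIntegral.integral_of_le hab]
  exact sq_integral_le_integral_sq_div_mul_integral
    (ae_restrict_of_forall_mem measurableSet_Ioc hv) hu.1 huv.1 hvi.1

theorem div_mul_sub_le_of_sq_le_div_mul {t m k γ I B C : ℝ} (ht : 0 < t) (hm : 0 < m)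
    (hk : 0 < k) (hγ : 0 ≤ γ) (hB : B ^ 2 ≤ m * t / k * C) :
    γ / t * (k / m * I - C) ≤ γ * k / m * (1 / t * I - (1 / t * B) ^ 2) := by
  have hkB : k * B ^ 2 ≤ m * t * C := calc
    k * B ^ 2 ≤ k * (m * t / k * C) := by gcongr
    _ = m * t * C := by field_simp
  have hgap : γ * k / m * (1 / t * I - (1 / t * B) ^ 2) - γ / t * (k / m * I - C)
      = γ / (m * t ^ 2) * (m * t * C - k * B ^ 2) := by
    field_simp
    ring
  rw [← sub_nonneg, hgap]
  exact mul_nonneg (by positivity) (sub_nonneg.2 hkB)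

/-- Upper bound on the power functional under the periodicity (integral) constraint:
`P(Σ) ≤ (γ k_B/m)·Var(√T)`. -/
theorem stmt_1 (t_f m k_B γ : ℝ) (ht_f : 0 < t_f) (hm : 0 < m) (hk : 0 < k_B) (hγ : 0 < γ)
    (T S : ℝ → ℝ)
    (hTcont : ContinuousOn T (Set.Icc 0 t_f))
    (hTpos : ∀ t ∈ Set.Icc 0 t_f, 0 < T t)
    (hScont : ContinuousOn S (Set.Icc 0 t_f))
    (hSpos : ∀ t ∈ Set.Icc 0 t_f, 0 < S t)
    (hconstr : ∫ t in (0:ℝ)..t_f, T t / S t = m * t_f / k_B) :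
    (γ / t_f) * ∫ t in (0:ℝ)..t_f, (k_B * T t / m - S t) ≤
      (γ * k_B / m) *
        ((1 / t_f) * (∫ t in (0:ℝ)..t_f, T t)
          - ((1 / t_f) * ∫ t in (0:ℝ)..t_f, Real.sqrt (T t)) ^ 2) := by
  rw [← Set.uIcc_of_le ht_f.le] at hTcont hScont hTpos hSpos
  have hS : IntervalIntegrable S volume 0 t_f := hScont.intervalIntegrable
  have hT : IntervalIntegrable T volume 0 t_f := hTcont.intervalIntegrable
  have hsqrt : ContinuousOn (fun t ↦ Real.sqrt (T t)) (Set.uIcc 0 t_f) :=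
    Real.continuous_sqrt.comp_continuousOn hTcont
  have hsqrt_sq_div :
      ∫ t in (0:ℝ)..t_f, Real.sqrt (T t) ^ 2 / S t = ∫ t in (0:ℝ)..t_f, T t / S t :=
    intervalIntegral.integral_congr fun t ht ↦ by
      simp only [Real.sq_sqrt (hTpos t ht).le]
  have hCS := sq_intervalIntegral_le_integral_sq_div_mul_integral ht_f.le
    (fun t ht ↦ hSpos t (Set.Icc_subset_uIcc (Set.Ioc_subset_Icc_self ht)))
    hsqrt.intervalIntegrable
    ((hsqrt.pow 2).div hScont fun t ht ↦ (hSpos t ht).ne').intervalIntegrable hS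
  rw [hsqrt_sq_div, hconstr] at hCS
  have hlin : ∫ t in (0:ℝ)..t_f, (k_B * T t / m - S t)
      = k_B / m * (∫ t in (0:ℝ)..t_f, T t) - ∫ t in (0:ℝ)..t_f, S t := by
    rw [intervalIntegral.integral_sub ((hT.const_mul k_B).div_const m) hS,
      intervalIntegral.integral_div, intervalIntegral.integral_const_mul]
    ring
  rw [hlin]
  exact div_mul_sub_le_of_sq_le_div_mul ht_f hm hk hγ.le hCS
end

section
/- Let T : [0, t_f] → ℝ be continuous and positive. Define Σ*(t) = ((k_B/(m·t_f))·∫₀^{t_f} √T(s) ds)·√T(t). Then Σ* satisfies the constraint ∫₀^{t_f} T(t)/Σ*(t) dt = m·t_f/k_B, and the power functional P(Σ*) = (γ/t_f)·∫₀^{t_f}(k_B·T/m − Σ*) dt equals exactly (γ·k_B/m)·Var(√T). Moreover Σ* is the unique continuous positive maximizer of P subject to the constraint. -/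
/-!
Writing `I = ∫ √T` and `c = k_B I / (m t_f)`, the trajectory is `Σ* = c √T`, so the constraint
and the value of the power are direct computations. For uniqueness, a competitor `S` with the
same constraint and the same power has `∫ S = ∫ Σ* = c I`, and then
`∫ (S - Σ*)² / S = ∫ S - 2 ∫ Σ* + c² ∫ T / S = c I - 2 c I + c I = 0`;
a continuous nonnegative integrand with zero integral vanishes, so `S = Σ*`.
-/

open Set intervalIntegral
open MeasureTheory (volume)

section

variable {a b : ℝ} {f g : ℝ → ℝ}

theorem eqOn_zero_of_integral_eq_zero_of_nonneg (hab : a < b) (hf : ContinuousOn f (Icc a b))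
    (hf0 : ∀ x ∈ Icc a b, 0 ≤ f x) (h : ∫ x in a..b, f x = 0) : EqOn f 0 (Icc a b) := by
  intro x hx
  by_contra hne
  have hpos : 0 < ∫ x in a..b, f x :=
    integral_pos hab hf (fun y hy => hf0 y (Ioc_subset_Icc_self hy))
      ⟨x, hx, lt_of_le_of_ne (hf0 x hx) (Ne.symm hne)⟩
  exact hpos.ne' h

theorem integral_sub_sq_div (hab : a ≤ b) (hf : ContinuousOn f (Icc a b))
    (hg : ContinuousOn g (Icc a b)) (hf0 : ∀ x ∈ Icc a b, f x ≠ 0) :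
    ∫ x in a..b, (f x - g x) ^ 2 / f x =
      (∫ x in a..b, f x) - 2 * (∫ x in a..b, g x) + ∫ x in a..b, g x ^ 2 / f x := by
  rw [← uIcc_of_le hab] at hf hg hf0
  have hexpand : EqOn (fun x => (f x - g x) ^ 2 / f x)
      (fun x => f x - 2 * g x + g x ^ 2 / f x) (uIcc a b) := by
    intro x hx
    field_simp [hf0 x hx]
    ring
  have hfi : IntervalIntegrable f volume a b := hf.intervalIntegrable
  have hgi : IntervalIntegrable (fun x => 2 * g x) volume a b :=
    (hg.const_mul 2).intervalIntegrable
  have hqi : IntervalIntegrable (fun x => g x ^ 2 / f x) volume a b :=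
    ((hg.pow 2).div hf hf0).intervalIntegrable
  rw [integral_congr hexpand, integral_add (hfi.sub hgi) hqi, integral_sub hfi hgi,
    integral_const_mul]

theorem eqOn_of_integral_eq_of_integral_sq_div_eq (hab : a < b) (hf : ContinuousOn f (Icc a b))
    (hg : ContinuousOn g (Icc a b)) (hf0 : ∀ x ∈ Icc a b, 0 < f x)
    (hfg : ∫ x in a..b, f x = ∫ x in a..b, g x)
    (hgf : ∫ x in a..b, g x ^ 2 / f x = ∫ x in a..b, g x) : EqOn f g (Icc a b) := by
  have hf0' : ∀ x ∈ Icc a b, f x ≠ 0 := fun x hx => (hf0 x hx).ne'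
  have hint : ∫ x in a..b, (f x - g x) ^ 2 / f x = 0 := by
    rw [integral_sub_sq_div hab.le hf hg hf0', hfg, hgf]
    ring
  have hzero := eqOn_zero_of_integral_eq_zero_of_nonneg hab (((hf.sub hg).pow 2).div hf hf0')
    (fun x hx => div_nonneg (sq_nonneg _) (hf0 x hx).le) hint
  intro x hx
  have hx0 : (f x - g x) ^ 2 / f x = 0 := hzero hx
  rw [div_eq_zero_iff, or_iff_left (hf0' x hx), sq_eq_zero_iff, sub_eq_zero] at hx0
  exact hx0

theorem integral_mul_div_sub (k m : ℝ) (hf : IntervalIntegrable f volume a b)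
    (hg : IntervalIntegrable g volume a b) :
    ∫ x in a..b, (k * f x / m - g x) = k / m * (∫ x in a..b, f x) - ∫ x in a..b, g x := by
  simp_rw [mul_div_right_comm k]
  rw [integral_sub (hf.const_mul _) hg, integral_const_mul]

theorem integral_div_const_mul_sqrt (c : ℝ) :
    ∫ x in a..b, f x / (c * Real.sqrt (f x)) = c⁻¹ * ∫ x in a..b, Real.sqrt (f x) := by
  rw [← integral_const_mul]
  congr 1 with x
  rw [div_mul_eq_div_div_swap, Real.div_sqrt, inv_mul_eq_div]

theorem integral_const_mul_sqrt_sq_div (c : ℝ) (hab : a ≤ b) (hf : ∀ x ∈ Icc a b, 0 ≤ f x) :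
    ∫ x in a..b, (c * Real.sqrt (f x)) ^ 2 / g x = c ^ 2 * ∫ x in a..b, f x / g x := by
  rw [← integral_const_mul]
  refine integral_congr fun x hx => ?_
  rw [uIcc_of_le hab] at hx
  simp only [mul_pow, Real.sq_sqrt (hf x hx), mul_div_assoc]

end

/-- The optimal variance trajectory `Σ*(t) = ((k_B/(m t_f))∫√T)·√T(t)` satisfies the
integral constraint, achieves power exactly `(γ k_B/m)·Var(√T)`, and is the unique
continuous positive maximizer of the power functional subject to the constraint. -/
theorem stmt_2 (t_f m k_B γ : ℝ) (ht_f : 0 < t_f) (hm : 0 < m) (hk : 0 < k_B) (hγ : 0 < γ)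
    (T : ℝ → ℝ)
    (hTcont : ContinuousOn T (Set.Icc 0 t_f))
    (hTpos : ∀ t ∈ Set.Icc 0 t_f, 0 < T t) :
    let Sstar : ℝ → ℝ := fun t =>
      ((k_B / (m * t_f)) * ∫ s in (0:ℝ)..t_f, Real.sqrt (T s)) * Real.sqrt (T t)
    let Var : ℝ := (1 / t_f) * (∫ t in (0:ℝ)..t_f, T t)
          - ((1 / t_f) * ∫ t in (0:ℝ)..t_f, Real.sqrt (T t)) ^ 2
    (∫ t in (0:ℝ)..t_f, T t / Sstar t) = m * t_f / k_B ∧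
    (γ / t_f) * (∫ t in (0:ℝ)..t_f, (k_B * T t / m - Sstar t)) = (γ * k_B / m) * Var ∧
    (∀ S : ℝ → ℝ, ContinuousOn S (Set.Icc 0 t_f) → (∀ t ∈ Set.Icc 0 t_f, 0 < S t) →
      (∫ t in (0:ℝ)..t_f, T t / S t) = m * t_f / k_B →
      (γ / t_f) * (∫ t in (0:ℝ)..t_f, (k_B * T t / m - S t)) = (γ * k_B / m) * Var →
      ∀ t ∈ Set.Icc 0 t_f, S t = Sstar t) := by
  intro Sstar Var
  set I := ∫ s in (0:ℝ)..t_f, Real.sqrt (T s) with hI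
  set c := k_B / (m * t_f) * I with hc
  have hsqrtT : ContinuousOn (fun t => Real.sqrt (T t)) (Icc 0 t_f) := hTcont.sqrt
  have hI_pos : 0 < I := by
    have h0 : (0:ℝ) ∈ Icc 0 t_f := ⟨le_rfl, ht_f.le⟩
    exact integral_pos ht_f hsqrtT (fun _ _ => Real.sqrt_nonneg _)
      ⟨0, h0, Real.sqrt_pos.2 (hTpos 0 h0)⟩
  have hSstar_cont : ContinuousOn Sstar (Icc 0 t_f) := continuousOn_const.mul hsqrtT
  have hSstar_int : ∫ t in (0:ℝ)..t_f, Sstar t = c * I := integral_const_mul _ _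
  have hconstraint : ∫ t in (0:ℝ)..t_f, T t / Sstar t = m * t_f / k_B := by
    rw [integral_div_const_mul_sqrt c, ← hI, hc]
    field_simp
  have hpower : ∀ S : ℝ → ℝ, ContinuousOn S (Icc 0 t_f) →
      (γ / t_f) * (∫ t in (0:ℝ)..t_f, (k_B * T t / m - S t)) =
        (γ / t_f) * (k_B / m * (∫ t in (0:ℝ)..t_f, T t) - ∫ t in (0:ℝ)..t_f, S t) :=
    fun S hS => by
      rw [integral_mul_div_sub _ _ (hTcont.intervalIntegrable_of_Icc ht_f.le)
        (hS.intervalIntegrable_of_Icc ht_f.le)]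
  have hvalue : (γ / t_f) * (∫ t in (0:ℝ)..t_f, (k_B * T t / m - Sstar t)) =
      (γ * k_B / m) * Var := by
    rw [hpower Sstar hSstar_cont, hSstar_int, hc]
    simp only [Var, ← hI]
    field_simp
  refine ⟨hconstraint, hvalue, fun S hS hS_pos hS_constraint hS_value => ?_⟩
  have hS_int : ∫ t in (0:ℝ)..t_f, S t = c * I := by
    rw [← hvalue, hpower S hS, hpower Sstar hSstar_cont, hSstar_int] at hS_value
    linarith [mul_left_cancel₀ (div_pos hγ ht_f).ne' hS_value]
  have hSstar_sq_div : ∫ t in (0:ℝ)..t_f, Sstar t ^ 2 / S t = c * I := by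
    rw [integral_const_mul_sqrt_sq_div c ht_f.le fun t ht => (hTpos t ht).le, hS_constraint, hc]
    field_simp
  exact eqOn_of_integral_eq_of_integral_sq_div_eq ht_f hS hSstar_cont hS_pos
    (hS_int.trans hSstar_int.symm) (hSstar_sq_div.trans hSstar_int.symm)
end

section
/- For the Carnot temperature profile with 0 < T_c < T_h and the optimal variance trajectory Σ*(t) = ((k_B/(m t_f))∫₀^{t_f}√T)·√T(t), the heat uptake during the hot phase equals Q_h = ∫₀^{t_f/2} γ·(k_B·T(t)/m − Σ*(t)) dt = (γ·k_B·t_f/(4m))·√T_h·(√T_h − √T_c), and the classical efficiency η = P*·t_f / Q_h equals the Curzon–Ahlborn value 1 − √(T_c/T_h). -/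
open MeasureTheory intervalIntegral Set

/-!
On each half of the cycle the Carnot profile is constant off the switching time `t_f / 2`, a null
set, so every integral reduces to a constant times the length of its interval. In particular
`∫₀^{t_f} √T = (t_f / 2)(√T_h + √T_c)`, and on the hot half the integrand of `Q_h` is the constant
`γ k_B (2 T_h − (√T_h + √T_c) √T_h) / (2m)`. The efficiency is then the ratio of two expressions
that share the factor `√T_h − √T_c`.
-/

section StepFunction

variable {a b c : ℝ}

lemma eqOn_uIoo_comp_ite_lt_left {α : Type*} (g : ℝ → α) (x y : ℝ) (hac : a ≤ c) :
    EqOn (fun t => g (if t < c then x else y)) (fun _ => g x) (uIoo a c) := by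
  intro t ht
  rw [uIoo_of_le hac] at ht
  simp [ht.2]

lemma eqOn_uIoo_comp_ite_lt_right {α : Type*} (g : ℝ → α) (x y : ℝ) (hcb : c ≤ b) :
    EqOn (fun t => g (if t < c then x else y)) (fun _ => g y) (uIoo c b) := by
  intro t ht
  rw [uIoo_of_le hcb] at ht
  simp [ht.1.not_gt]

variable {E : Type*} [NormedAddCommGroup E] [NormedSpace ℝ E] [CompleteSpace E]
  (g : ℝ → E) (x y : ℝ)

lemma integral_comp_ite_lt_left (hac : a ≤ c) :
    ∫ t in a..c, g (if t < c then x else y) = (c - a) • g x := by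
  rw [integral_congr_uIoo (eqOn_uIoo_comp_ite_lt_left g x y hac), intervalIntegral.integral_const]

lemma integral_comp_ite_lt_right (hcb : c ≤ b) :
    ∫ t in c..b, g (if t < c then x else y) = (b - c) • g y := by
  rw [integral_congr_uIoo (eqOn_uIoo_comp_ite_lt_right g x y hcb), intervalIntegral.integral_const]

lemma integral_comp_ite_lt (hac : a ≤ c) (hcb : c ≤ b) :
    ∫ t in a..b, g (if t < c then x else y) = (c - a) • g x + (b - c) • g y := by
  have hleft : IntervalIntegrable (fun t => g (if t < c then x else y)) volume a c :=
    intervalIntegrable_const.congr_uIoo (eqOn_uIoo_comp_ite_lt_left g x y hac).symm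
  have hright : IntervalIntegrable (fun t => g (if t < c then x else y)) volume c b :=
    intervalIntegrable_const.congr_uIoo (eqOn_uIoo_comp_ite_lt_right g x y hcb).symm
  rw [← integral_add_adjacent_intervals hleft hright, integral_comp_ite_lt_left g x y hac,
    integral_comp_ite_lt_right g x y hcb]

end StepFunction

lemma div_mul_sqrt_mul_sub_sqrt_eq_one_sub_sqrt_div {A T_c T_h : ℝ} (hA : A ≠ 0)
    (hc : 0 ≤ T_c) (hch : T_c < T_h) :
    A * (√T_h - √T_c) ^ 2 / (A * √T_h * (√T_h - √T_c)) = 1 - √(T_c / T_h) := by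
  have hgap : √T_h - √T_c ≠ 0 := (sub_pos.mpr (Real.sqrt_lt_sqrt hc hch)).ne'
  have hh : √T_h ≠ 0 := (Real.sqrt_pos.mpr (hc.trans_lt hch)).ne'
  rw [Real.sqrt_div hc]
  field_simp

/-- For the Carnot profile with the optimal variance trajectory, the hot-phase heat uptake
equals `(γ k_B t_f/(4m))·√T_h·(√T_h − √T_c)`, and the classical efficiency `P* t_f / Q_h`
equals the Curzon–Ahlborn value `1 − √(T_c/T_h)`. -/
theorem stmt_6 (t_f m k_B γ : ℝ) (ht_f : 0 < t_f) (hm : 0 < m) (hk : 0 < k_B) (hγ : 0 < γ)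
    (T_c T_h : ℝ) (hc : 0 < T_c) (hch : T_c < T_h) :
    let T : ℝ → ℝ := fun t => if t < t_f / 2 then T_h else T_c
    let Sstar : ℝ → ℝ := fun t =>
      ((k_B / (m * t_f)) * ∫ s in (0:ℝ)..t_f, Real.sqrt (T s)) * Real.sqrt (T t)
    let Q_h : ℝ := ∫ t in (0:ℝ)..(t_f / 2), γ * (k_B * T t / m - Sstar t)
    let Pstar : ℝ := (γ * k_B / (4 * m)) * (Real.sqrt T_h - Real.sqrt T_c) ^ 2
    Q_h = (γ * k_B * t_f / (4 * m)) * Real.sqrt T_h * (Real.sqrt T_h - Real.sqrt T_c) ∧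
    Pstar * t_f / Q_h = 1 - Real.sqrt (T_c / T_h) := by
  intro T Sstar Q_h Pstar
  have hhalf : 0 ≤ t_f / 2 := by positivity
  have hsqrt_integral : ∫ s in (0:ℝ)..t_f, √(T s) = t_f / 2 * (√T_h + √T_c) := by
    rw [integral_comp_ite_lt Real.sqrt T_h T_c hhalf (by linarith), smul_eq_mul, smul_eq_mul]
    ring
  have hQ : Q_h = γ * k_B * t_f / (4 * m) * √T_h * (√T_h - √T_c) := by
    have hsq : √T_h * √T_h = T_h := Real.mul_self_sqrt (hc.trans hch).le
    have hhot := integral_comp_ite_lt_left (fun u => γ * (k_B * u / m - k_B / (m * t_f) *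
      (t_f / 2 * (√T_h + √T_c)) * √u)) T_h T_c hhalf
    rw [sub_zero, smul_eq_mul] at hhot
    simp only [Q_h, Sstar, hsqrt_integral]
    rw [hhot]
    field_simp
    linear_combination (-8) * hsq
  refine ⟨hQ, ?_⟩
  rw [hQ, show Pstar * t_f = γ * k_B * t_f / (4 * m) * (√T_h - √T_c) ^ 2 by ring]
  exact div_mul_sqrt_mul_sub_sqrt_eq_one_sub_sqrt_div (by positivity) hc.le hch
end

section
/- Under the hypotheses of the low-friction ODE Σ'(t) = Σ(t)·(q'(t)/(2q(t)) − γ/m) + (γ k_B/m²)·T(t) with Σ and q positive and periodic (Σ(0)=Σ(t_f), q(0)=q(t_f)), the integral constraint ∫₀^{t_f} T(t)/Σ(t) dt = m·t_f/k_B holds. -/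
/-!
Dividing the ODE `Σ' = Σ (q'/(2q) - a) + b T` by `Σ` shows that `T / Σ` is the derivative of
`(log Σ - (log q) / 2 + a t) / b`. Integrating over a period, the logarithms of the periodic
quantities `Σ` and `q` cancel and only the linear term `a t_f / b` survives.
-/

open MeasureTheory intervalIntegral

lemma hasDerivAt_div_of_ode {T S q : ℝ → ℝ} {S' q' a b t : ℝ} (hb : b ≠ 0)
    (hS : HasDerivAt S S' t) (hq : HasDerivAt q q' t) (hSt : S t ≠ 0) (hqt : q t ≠ 0)
    (hODE : S' = S t * (q' / (2 * q t) - a) + b * T t) :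
    HasDerivAt (fun s => (Real.log (S s) - Real.log (q s) / 2 + a * s) / b) (T t / S t) t := by
  have hlog := ((hS.log hSt).sub ((hq.log hqt).div_const 2)).add ((hasDerivAt_id t).const_mul a)
  have hval : T t / S t = (S' / S t - q' / q t / 2 + a * 1) / b := by
    rw [hODE]
    field_simp
    ring
  exact hval ▸ hlog.div_const b

lemma integral_div_eq_of_ode_of_periodic {T S q S' q' : ℝ → ℝ} {a b t₀ t₁ : ℝ} (hb : b ≠ 0)
    (hT : ContinuousOn T (Set.uIcc t₀ t₁))
    (hS : ∀ t ∈ Set.uIcc t₀ t₁, HasDerivAt S (S' t) t)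
    (hq : ∀ t ∈ Set.uIcc t₀ t₁, HasDerivAt q (q' t) t)
    (hSne : ∀ t ∈ Set.uIcc t₀ t₁, S t ≠ 0) (hqne : ∀ t ∈ Set.uIcc t₀ t₁, q t ≠ 0)
    (hODE : ∀ t ∈ Set.uIcc t₀ t₁, S' t = S t * (q' t / (2 * q t) - a) + b * T t)
    (hSper : S t₀ = S t₁) (hqper : q t₀ = q t₁) :
    ∫ t in t₀..t₁, T t / S t = a * (t₁ - t₀) / b := by
  have hScont : ContinuousOn S (Set.uIcc t₀ t₁) := fun t ht =>
    (hS t ht).continuousAt.continuousWithinAt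
  rw [integral_eq_sub_of_hasDerivAt
    (fun t ht => hasDerivAt_div_of_ode hb (hS t ht) (hq t ht) (hSne t ht) (hqne t ht) (hODE t ht))
    ((hT.div hScont hSne).intervalIntegrable), hSper, hqper]
  ring

theorem stmt_8_general (t_f m k_B γ : ℝ) (ht_f : 0 < t_f) (hm : 0 < m) (hk : 0 < k_B) (hγ : 0 < γ)
    (T S q q' S' : ℝ → ℝ)
    (hTcont : ContinuousOn T (Set.Icc 0 t_f))
    (hSpos : ∀ t ∈ Set.Icc 0 t_f, 0 < S t)
    (hqpos : ∀ t ∈ Set.Icc 0 t_f, 0 < q t)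
    (hq : ∀ t ∈ Set.Icc 0 t_f, HasDerivAt q (q' t) t)
    (hS : ∀ t ∈ Set.Icc 0 t_f, HasDerivAt S (S' t) t)
    (hODE : ∀ t ∈ Set.Icc 0 t_f,
      S' t = S t * (q' t / (2 * q t) - γ / m) + (γ * k_B / m ^ 2) * T t)
    (hSper : S 0 = S t_f) (hqper : q 0 = q t_f) :
    ∫ t in (0:ℝ)..t_f, T t / S t = m * t_f / k_B := by
  have hb : γ * k_B / m ^ 2 ≠ 0 := by positivity
  rw [← Set.uIcc_of_le ht_f.le] at hTcont hSpos hqpos hq hS hODE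
  rw [integral_div_eq_of_ode_of_periodic hb hTcont hS hq (fun t ht => (hSpos t ht).ne')
    (fun t ht => (hqpos t ht).ne') hODE hSper hqper]
  field_simp
  ring

/-- Periodicity of the protocol and state forces the integral constraint
`∫₀^{t_f} T/Σ = m t_f / k_B`. -/
theorem stmt_8 (t_f m k_B γ : ℝ) (ht_f : 0 < t_f) (hm : 0 < m) (hk : 0 < k_B) (hγ : 0 < γ)
    (T S q q' S' : ℝ → ℝ)
    (hTcont : ContinuousOn T (Set.Icc 0 t_f))
    (hTpos : ∀ t ∈ Set.Icc 0 t_f, 0 < T t)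
    (hSpos : ∀ t ∈ Set.Icc 0 t_f, 0 < S t)
    (hqpos : ∀ t ∈ Set.Icc 0 t_f, 0 < q t)
    (hq : ∀ t ∈ Set.Icc 0 t_f, HasDerivAt q (q' t) t)
    (hq'cont : ContinuousOn q' (Set.Icc 0 t_f))
    (hS'cont : ContinuousOn S' (Set.Icc 0 t_f))
    (hS : ∀ t ∈ Set.Icc 0 t_f, HasDerivAt S (S' t) t)
    (hODE : ∀ t ∈ Set.Icc 0 t_f,
      S' t = S t * (q' t / (2 * q t) - γ / m) + (γ * k_B / m ^ 2) * T t)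
    (hSper : S 0 = S t_f) (hqper : q 0 = q t_f) :
    ∫ t in (0:ℝ)..t_f, T t / S t = m * t_f / k_B :=
  stmt_8_general t_f m k_B γ ht_f hm hk hγ T S q q' S' hTcont hSpos hqpos hq hS hODE hSper hqper
end

section
/- Let T : [0, t_f] → ℝ be continuous and positive, λ > 0, μ ≥ 0, and set Σ*(t) = √((T(t)² + μ T(t))/λ). Then for every continuous positive Σ : [0,t_f] → ℝ satisfying both ∫₀^{t_f} Σ(t) dt = ∫₀^{t_f} Σ*(t) dt and ∫₀^{t_f} T(t)/Σ(t) dt = ∫₀^{t_f} T(t)/Σ*(t) dt, one has ∫₀^{t_f} T(t)²/Σ(t) dt ≥ ∫₀^{t_f} T(t)²/Σ*(t) dt. -/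
open MeasureTheory intervalIntegral Set

/-!
The optimality is a Lagrange-multiplier argument made global by convexity. Writing
`a = T² + μT`, the Lagrangian density `T²/Σ + μ T/Σ + λ Σ = a/Σ + λ Σ` is, for each
fixed `t`, a convex function of `Σ > 0` minimized at `Σ = √(a/λ) = Σ*` (AM–GM).
Integrating this pointwise inequality and cancelling the two constraint integrals,
which agree for `Σ` and `Σ*`, leaves the inequality between the dissipation integrals.
-/

theorem div_sqrt_div_add_mul_sqrt_div_le {a lam x : ℝ} (ha : 0 ≤ a) (hlam : 0 < lam)
    (hx : 0 < x) : a / √(a / lam) + lam * √(a / lam) ≤ a / x + lam * x := by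
  set s := √(a / lam)
  have hs : 0 ≤ s := Real.sqrt_nonneg _
  have ha_eq : a = lam * s ^ 2 := by
    rw [Real.sq_sqrt (div_nonneg ha hlam.le)]
    field_simp
  -- For `a = 0` this holds only through the junk value `a / 0 = 0`.
  have hmin : a / s = lam * s := by
    rcases hs.eq_or_lt with h | h
    · simp [← h]
    · rw [ha_eq]
      field_simp
  have hgap : a / x + lam * x - 2 * (lam * s) = lam * (x - s) ^ 2 / x := by
    rw [ha_eq]
    field_simp
    ring
  have : 0 ≤ lam * (x - s) ^ 2 / x := by positivity
  linarith

theorem integral_le_of_lagrangian_le {a b mu lam : ℝ} (hab : a ≤ b)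
    {f f₀ g g₀ h h₀ : ℝ → ℝ}
    (hf : IntervalIntegrable f volume a b) (hf₀ : IntervalIntegrable f₀ volume a b)
    (hg : IntervalIntegrable g volume a b) (hg₀ : IntervalIntegrable g₀ volume a b)
    (hh : IntervalIntegrable h volume a b) (hh₀ : IntervalIntegrable h₀ volume a b)
    (hg_eq : ∫ x in a..b, g x = ∫ x in a..b, g₀ x)
    (hh_eq : ∫ x in a..b, h x = ∫ x in a..b, h₀ x)
    (hle : ∀ x ∈ Icc a b, f₀ x + mu * g₀ x + lam * h₀ x ≤ f x + mu * g x + lam * h x) :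
    ∫ x in a..b, f₀ x ≤ ∫ x in a..b, f x := by
  have hmono := integral_mono_on hab ((hf₀.add (hg₀.const_mul mu)).add (hh₀.const_mul lam))
    ((hf.add (hg.const_mul mu)).add (hh.const_mul lam)) hle
  simp only [integral_add (hf₀.add (hg₀.const_mul mu)) (hh₀.const_mul lam),
    integral_add (hf.add (hg.const_mul mu)) (hh.const_mul lam),
    integral_add hf₀ (hg₀.const_mul mu), integral_add hf (hg.const_mul mu),
    intervalIntegral.integral_const_mul, hg_eq, hh_eq] at hmono
  linarith

theorem intervalIntegrable_lagrangian_terms {b : ℝ} (hb : 0 ≤ b) {T S : ℝ → ℝ}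
    (hT : ContinuousOn T (Icc 0 b)) (hS : ContinuousOn S (Icc 0 b))
    (hS_pos : ∀ t ∈ Icc 0 b, 0 < S t) :
    IntervalIntegrable (fun t => T t ^ 2 / S t) volume 0 b ∧
      IntervalIntegrable (fun t => T t / S t) volume 0 b ∧ IntervalIntegrable S volume 0 b := by
  have hS_ne : ∀ t ∈ Icc 0 b, S t ≠ 0 := fun t ht => (hS_pos t ht).ne'
  exact ⟨((hT.pow 2).div hS hS_ne).intervalIntegrable_of_Icc hb,
    (hT.div hS hS_ne).intervalIntegrable_of_Icc hb, hS.intervalIntegrable_of_Icc hb⟩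

/-- Global optimality of the Lagrangian stationary point: among all continuous positive
variance trajectories with the same two integral constraints, `Σ*` minimizes `∫ T²/Σ`. -/
theorem stmt_11 (t_f : ℝ) (ht_f : 0 < t_f) (T : ℝ → ℝ)
    (hTcont : ContinuousOn T (Set.Icc 0 t_f))
    (hTpos : ∀ t ∈ Set.Icc 0 t_f, 0 < T t)
    (lam mu : ℝ) (hlam : 0 < lam) (hmu : 0 ≤ mu) :
    let Sstar : ℝ → ℝ := fun t => Real.sqrt ((T t ^ 2 + mu * T t) / lam)
    ∀ S : ℝ → ℝ, ContinuousOn S (Set.Icc 0 t_f) → (∀ t ∈ Set.Icc 0 t_f, 0 < S t) →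
      (∫ t in (0:ℝ)..t_f, S t) = (∫ t in (0:ℝ)..t_f, Sstar t) →
      (∫ t in (0:ℝ)..t_f, T t / S t) = (∫ t in (0:ℝ)..t_f, T t / Sstar t) →
      (∫ t in (0:ℝ)..t_f, T t ^ 2 / Sstar t) ≤ (∫ t in (0:ℝ)..t_f, T t ^ 2 / S t) := by
  intro Sstar S hScont hSpos hS_eq hTS_eq
  have hA_pos : ∀ t ∈ Icc 0 t_f, 0 < T t ^ 2 + mu * T t := fun t ht => by
    have := hTpos t ht
    positivity
  have hSstar_pos : ∀ t ∈ Icc 0 t_f, 0 < Sstar t := fun t ht =>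
    Real.sqrt_pos.2 (div_pos (hA_pos t ht) hlam)
  have hSstar_cont : ContinuousOn Sstar (Icc 0 t_f) :=
    (((hTcont.pow 2).add (continuousOn_const.mul hTcont)).div_const _).sqrt
  obtain ⟨hf₀, hg₀, hh₀⟩ :=
    intervalIntegrable_lagrangian_terms ht_f.le hTcont hSstar_cont hSstar_pos
  obtain ⟨hf, hg, hh⟩ := intervalIntegrable_lagrangian_terms ht_f.le hTcont hScont hSpos
  refine integral_le_of_lagrangian_le (mu := mu) (lam := lam) ht_f.le hf hf₀ hg hg₀ hh hh₀
    hTS_eq hS_eq fun t ht => ?_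
  have hcombine : ∀ y ≠ 0, T t ^ 2 / y + mu * (T t / y) = (T t ^ 2 + mu * T t) / y := by
    intro y hy
    field_simp
  rw [hcombine _ (hSstar_pos t ht).ne', hcombine _ (hSpos t ht).ne']
  exact div_sqrt_div_add_mul_sqrt_div_le (hA_pos t ht).le hlam (hSpos t ht)
end

section
/- Let T : [0, t_f] → ℝ be continuous and positive. Define F(μ) = (∫₀^{t_f} √(T² + μT) dt)·(∫₀^{t_f} √(T/(T+μ)) dt) for μ ≥ 0. Then F(0) = t_f·∫₀^{t_f} T dt, and as μ → ∞, F(μ) → (∫₀^{t_f} √T dt)². Consequently, the equation F(μ) = t_f ∫₀^{t_f} T dt − (t_f² m/(γ k_B))·P has solution μ = 0 when P = 0, and P → P* = (γ k_B/m)·Var(√T) as μ → ∞. -/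
/-!
Write `√(T² + μT) = √T · √(T + μ)` and `√(T/(T + μ)) = √T / √(T + μ)`. If `T ≤ B` on the
interval, the weight `√(T + μ)` lies between `√μ` and `√(B + μ)`, so `F(μ)` is squeezed
between `(∫√T)² · √μ/√(B + μ)` and `(∫√T)² · √(B + μ)/√μ`; both ratios tend to `1` as
`μ → ∞`.
-/

open MeasureTheory intervalIntegral Filter Set Topology

section Squeeze

variable {a b c C : ℝ} {f w : ℝ → ℝ}

theorem integral_mul_weight_mem_Icc (hab : a ≤ b) (hf : ContinuousOn f (Icc a b))
    (hw : ContinuousOn w (Icc a b)) (hf0 : ∀ t ∈ Icc a b, 0 ≤ f t)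
    (hwc : ∀ t ∈ Icc a b, c ≤ w t) (hwC : ∀ t ∈ Icc a b, w t ≤ C) :
    (∫ t in a..b, f t) * c ≤ ∫ t in a..b, f t * w t ∧
      ∫ t in a..b, f t * w t ≤ (∫ t in a..b, f t) * C := by
  have hfw := (hf.mul hw).intervalIntegrable_of_Icc (μ := volume) hab
  have hfc := (hf.mul_const c).intervalIntegrable_of_Icc (μ := volume) hab
  have hfC := (hf.mul_const C).intervalIntegrable_of_Icc (μ := volume) hab
  rw [← intervalIntegral.integral_mul_const, ← intervalIntegral.integral_mul_const]
  exact ⟨integral_mono_on hab hfc hfw fun t ht => mul_le_mul_of_nonneg_left (hwc t ht) (hf0 t ht),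
    integral_mono_on hab hfw hfC fun t ht => mul_le_mul_of_nonneg_left (hwC t ht) (hf0 t ht)⟩

theorem integral_div_weight_mem_Icc (hab : a ≤ b) (hf : ContinuousOn f (Icc a b))
    (hw : ContinuousOn w (Icc a b)) (hf0 : ∀ t ∈ Icc a b, 0 ≤ f t) (hc : 0 < c)
    (hwc : ∀ t ∈ Icc a b, c ≤ w t) (hwC : ∀ t ∈ Icc a b, w t ≤ C) :
    (∫ t in a..b, f t) / C ≤ ∫ t in a..b, f t / w t ∧
      ∫ t in a..b, f t / w t ≤ (∫ t in a..b, f t) / c := by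
  have hw0 : ∀ t ∈ Icc a b, 0 < w t := fun t ht => hc.trans_le (hwc t ht)
  have hfw := (hf.div hw fun t ht => (hw0 t ht).ne').intervalIntegrable_of_Icc (μ := volume) hab
  have hfc := (hf.div_const c).intervalIntegrable_of_Icc (μ := volume) hab
  have hfC := (hf.div_const C).intervalIntegrable_of_Icc (μ := volume) hab
  rw [← intervalIntegral.integral_div, ← intervalIntegral.integral_div]
  exact ⟨integral_mono_on hab hfC hfw
      fun t ht => div_le_div_of_nonneg_left (hf0 t ht) (hw0 t ht) (hwC t ht),
    integral_mono_on hab hfw hfc fun t ht => div_le_div_of_nonneg_left (hf0 t ht) hc (hwc t ht)⟩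

theorem integral_mul_weight_mul_integral_div_weight_mem_Icc (hab : a ≤ b)
    (hf : ContinuousOn f (Icc a b)) (hw : ContinuousOn w (Icc a b))
    (hf0 : ∀ t ∈ Icc a b, 0 ≤ f t) (hc : 0 < c)
    (hwc : ∀ t ∈ Icc a b, c ≤ w t) (hwC : ∀ t ∈ Icc a b, w t ≤ C) :
    (∫ t in a..b, f t) ^ 2 * (c / C) ≤
        (∫ t in a..b, f t * w t) * ∫ t in a..b, f t / w t ∧
      (∫ t in a..b, f t * w t) * (∫ t in a..b, f t / w t) ≤
        (∫ t in a..b, f t) ^ 2 * (C / c) := by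
  have ha : a ∈ Icc a b := left_mem_Icc.2 hab
  have hC : 0 < C := hc.trans_le ((hwc a ha).trans (hwC a ha))
  have hS : 0 ≤ ∫ t in a..b, f t := integral_nonneg hab hf0
  obtain ⟨hmul_lo, hmul_hi⟩ := integral_mul_weight_mem_Icc hab hf hw hf0 hwc hwC
  obtain ⟨hdiv_lo, hdiv_hi⟩ := integral_div_weight_mem_Icc hab hf hw hf0 hc hwc hwC
  constructor
  · calc (∫ t in a..b, f t) ^ 2 * (c / C)
        = ((∫ t in a..b, f t) * c) * ((∫ t in a..b, f t) / C) := by ring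
      _ ≤ _ :=
        mul_le_mul hmul_lo hdiv_lo (div_nonneg hS hC.le) ((mul_nonneg hS hc.le).trans hmul_lo)
  · calc (∫ t in a..b, f t * w t) * (∫ t in a..b, f t / w t)
        ≤ ((∫ t in a..b, f t) * C) * ((∫ t in a..b, f t) / c) :=
          mul_le_mul hmul_hi hdiv_hi ((div_nonneg hS hC.le).trans hdiv_lo) (mul_nonneg hS hC.le)
      _ = (∫ t in a..b, f t) ^ 2 * (C / c) := by ring

end Squeeze

theorem tendsto_sqrt_add_div_sqrt_atTop (B : ℝ) :
    Tendsto (fun μ => √(B + μ) / √μ) atTop (𝓝 1) := by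
  have h : Tendsto (fun μ : ℝ => √(B / μ + 1)) atTop (𝓝 (√(0 + 1))) :=
    ((tendsto_const_nhds.div_atTop tendsto_id).add_const 1).sqrt
  rw [zero_add, Real.sqrt_one] at h
  refine h.congr' ?_
  filter_upwards [eventually_gt_atTop 0] with μ hμ
  rw [← Real.sqrt_div' _ hμ.le, add_div, div_self hμ.ne']

section Multiplier

variable {a b : ℝ} {T : ℝ → ℝ}

theorem integral_sqrt_sq_add_zero_mul_integral_sqrt_div_add_zero
    (hab : a ≤ b) (hT : ∀ t ∈ Icc a b, 0 < T t) :
    (∫ t in a..b, √(T t ^ 2 + 0 * T t)) * (∫ t in a..b, √(T t / (T t + 0))) =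
      (b - a) * ∫ t in a..b, T t := by
  have hsq : (∫ t in a..b, √(T t ^ 2 + 0 * T t)) = ∫ t in a..b, T t :=
    integral_congr fun t ht => by
      simp [Real.sqrt_sq (hT t (uIcc_of_le hab ▸ ht)).le]
  have hone : (∫ t in a..b, √(T t / (T t + 0))) = ∫ _ in a..b, (1 : ℝ) :=
    integral_congr fun t ht => by
      simp [div_self (hT t (uIcc_of_le hab ▸ ht)).ne']
  rw [hsq, hone, integral_one, mul_comm]

theorem tendsto_integral_sqrt_sq_add_mul_mul_integral_sqrt_div_add_atTop
    (hab : a ≤ b) (hTc : ContinuousOn T (Icc a b)) (hT : ∀ t ∈ Icc a b, 0 ≤ T t) :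
    Tendsto
      (fun μ => (∫ t in a..b, √(T t ^ 2 + μ * T t)) * ∫ t in a..b, √(T t / (T t + μ))) atTop
      (𝓝 ((∫ t in a..b, √(T t)) ^ 2)) := by
  obtain ⟨B, hB⟩ : BddAbove (T '' Icc a b) := isCompact_Icc.bddAbove_image hTc
  have hTB : ∀ t ∈ Icc a b, T t ≤ B := fun t ht => hB (mem_image_of_mem T ht)
  set S := ∫ t in a..b, √(T t)
  have hlim : Tendsto (fun μ => S ^ 2 * (√(B + μ) / √μ)) atTop (𝓝 (S ^ 2)) := by
    simpa using (tendsto_sqrt_add_div_sqrt_atTop B).const_mul (S ^ 2)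
  have hlim' : Tendsto (fun μ => S ^ 2 * (√μ / √(B + μ))) atTop (𝓝 (S ^ 2)) := by
    simpa using ((tendsto_sqrt_add_div_sqrt_atTop B).inv₀ one_ne_zero).const_mul (S ^ 2)
  have hbounds : ∀ᶠ μ in atTop,
      S ^ 2 * (√μ / √(B + μ)) ≤
          (∫ t in a..b, √(T t ^ 2 + μ * T t)) * (∫ t in a..b, √(T t / (T t + μ))) ∧
        (∫ t in a..b, √(T t ^ 2 + μ * T t)) * (∫ t in a..b, √(T t / (T t + μ))) ≤
          S ^ 2 * (√(B + μ) / √μ) := by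
    filter_upwards [eventually_gt_atTop 0] with μ hμ
    have hmul :
        (∫ t in a..b, √(T t ^ 2 + μ * T t)) = ∫ t in a..b, √(T t) * √(T t + μ) :=
      integral_congr fun t ht => by
        rw [← Real.sqrt_mul (hT t (uIcc_of_le hab ▸ ht))]
        ring_nf
    have hdiv : (∫ t in a..b, √(T t / (T t + μ))) = ∫ t in a..b, √(T t) / √(T t + μ) :=
      integral_congr fun t ht => Real.sqrt_div' _ (by linarith [hT t (uIcc_of_le hab ▸ ht)])
    rw [hmul, hdiv]
    exact integral_mul_weight_mul_integral_div_weight_mem_Icc hab hTc.sqrt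
      (hTc.add continuousOn_const).sqrt (fun _ _ => Real.sqrt_nonneg _) (Real.sqrt_pos.2 hμ)
      (fun t ht => Real.sqrt_le_sqrt (by linarith [hT t ht]))
      (fun t ht => Real.sqrt_le_sqrt (by linarith [hTB t ht]))
  exact tendsto_of_tendsto_of_tendsto_of_le_of_le' hlim' hlim
    (hbounds.mono fun _ h => h.1) (hbounds.mono fun _ h => h.2)

end Multiplier

theorem stmt_13_general (t_f m k_B γ : ℝ) (ht_f : 0 < t_f)
    (T : ℝ → ℝ)
    (hTcont : ContinuousOn T (Set.Icc 0 t_f))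
    (hTpos : ∀ t ∈ Set.Icc 0 t_f, 0 < T t) :
    let F : ℝ → ℝ := fun mu =>
      (∫ t in (0:ℝ)..t_f, Real.sqrt (T t ^ 2 + mu * T t)) *
        (∫ t in (0:ℝ)..t_f, Real.sqrt (T t / (T t + mu)))
    F 0 = t_f * (∫ t in (0:ℝ)..t_f, T t) ∧
    Tendsto F atTop (nhds ((∫ t in (0:ℝ)..t_f, Real.sqrt (T t)) ^ 2)) ∧
    Tendsto (fun mu => (γ * k_B / (t_f ^ 2 * m)) * (t_f * (∫ t in (0:ℝ)..t_f, T t) - F mu))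
      atTop
      (nhds ((γ * k_B / m) *
        ((1 / t_f) * (∫ t in (0:ℝ)..t_f, T t)
          - ((1 / t_f) * ∫ t in (0:ℝ)..t_f, Real.sqrt (T t)) ^ 2))) := by
  intro F
  have hF0 : F 0 = t_f * ∫ t in (0:ℝ)..t_f, T t :=
    (integral_sqrt_sq_add_zero_mul_integral_sqrt_div_add_zero ht_f.le hTpos).trans
      (by rw [sub_zero])
  have hF : Tendsto F atTop (𝓝 ((∫ t in (0:ℝ)..t_f, √(T t)) ^ 2)) :=
    tendsto_integral_sqrt_sq_add_mul_mul_integral_sqrt_div_add_atTop ht_f.le hTcont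
      fun t ht => (hTpos t ht).le
  refine ⟨hF0, hF, ?_⟩
  convert (tendsto_const_nhds.sub hF).const_mul (γ * k_B / (t_f ^ 2 * m)) using 2
  field_simp

/-- Behavior of the multiplier function `F(μ)`: `F(0) = t_f·∫T`, `F(μ) → (∫√T)²` as
`μ → ∞`, and the corresponding power `P(μ) = (γ k_B/(t_f² m))(t_f∫T − F(μ))` tends to
`P* = (γ k_B/m)·Var(√T)`. -/
theorem stmt_13 (t_f m k_B γ : ℝ) (ht_f : 0 < t_f) (hm : 0 < m) (hk : 0 < k_B) (hγ : 0 < γ)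
    (T : ℝ → ℝ)
    (hTcont : ContinuousOn T (Set.Icc 0 t_f))
    (hTpos : ∀ t ∈ Set.Icc 0 t_f, 0 < T t) :
    let F : ℝ → ℝ := fun mu =>
      (∫ t in (0:ℝ)..t_f, Real.sqrt (T t ^ 2 + mu * T t)) *
        (∫ t in (0:ℝ)..t_f, Real.sqrt (T t / (T t + mu)))
    F 0 = t_f * (∫ t in (0:ℝ)..t_f, T t) ∧
    Tendsto F atTop (nhds ((∫ t in (0:ℝ)..t_f, Real.sqrt (T t)) ^ 2)) ∧
    Tendsto (fun mu => (γ * k_B / (t_f ^ 2 * m)) * (t_f * (∫ t in (0:ℝ)..t_f, T t) - F mu))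
      atTop
      (nhds ((γ * k_B / m) *
        ((1 / t_f) * (∫ t in (0:ℝ)..t_f, T t)
          - ((1 / t_f) * ∫ t in (0:ℝ)..t_f, Real.sqrt (T t)) ^ 2))) :=
  stmt_13_general t_f m k_B γ ht_f T hTcont hTpos
end

section
/- Let s : [0, t_f] → ℝ be measurable and nonnegative, with m₁ = mean(s), V = Var(s) > 0, μ₃ the third central moment of s. If μ₃ < 0, then the efficiency at maximum power η* = 1/(2 + μ₃/(V·m₁)) satisfies 1/2 < η* ≤ 1; if μ₃ > 0 then 0 < η* < 1/2; and if μ₃ = 0 then η* = 1/2. -/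
/-!
Averages over `[0, t_f]` are expectations for the uniform probability measure on it. Since
`s ≥ 0`, expanding `0 ≤ E[s (s - m₁)²]` gives `μ₃ + m₁ V ≥ 0`, so `x := μ₃ / (V m₁) ≥ -1`, and
`η* = 1 / (2 + x)` lies in `(1/2, 1]`, `(0, 1/2)` or `{1/2}` according to the sign of `x`, which is
that of `μ₃`. Here `m₁ > 0` because a nonnegative function with zero mean vanishes a.e., which
would force `V = 0`.
-/

open MeasureTheory ProbabilityTheory Set

section Moments

variable {Ω : Type*} [MeasurableSpace Ω] {μ : Measure Ω} {X : Ω → ℝ}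

theorem integrable_sub_const_sq [IsFiniteMeasure μ] (c : ℝ) (h1 : Integrable X μ)
    (h2 : Integrable (fun ω => X ω ^ 2) μ) : Integrable (fun ω => (X ω - c) ^ 2) μ := by
  have hexpand : (fun ω => (X ω - c) ^ 2) = fun ω => X ω ^ 2 + ((-2 * c) * X ω + c ^ 2) := by
    funext ω; ring
  rw [hexpand]
  exact h2.add ((h1.const_mul _).add (integrable_const _))

theorem integrable_sub_const_pow_three [IsFiniteMeasure μ] (c : ℝ) (h1 : Integrable X μ)
    (h2 : Integrable (fun ω => X ω ^ 2) μ) (h3 : Integrable (fun ω => X ω ^ 3) μ) :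
    Integrable (fun ω => (X ω - c) ^ 3) μ := by
  have hexpand : (fun ω => (X ω - c) ^ 3)
      = fun ω => X ω ^ 3 + ((-3 * c) * X ω ^ 2 + ((3 * c ^ 2) * X ω + -c ^ 3)) := by
    funext ω; ring
  rw [hexpand]
  exact h3.add ((h2.const_mul _).add ((h1.const_mul _).add (integrable_const _)))

theorem neg_mul_integral_sub_sq_le_integral_sub_pow_three (m : ℝ) (hX : 0 ≤ᵐ[μ] X)
    (h2 : Integrable (fun ω => (X ω - m) ^ 2) μ) (h3 : Integrable (fun ω => (X ω - m) ^ 3) μ) :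
    -(m * ∫ ω, (X ω - m) ^ 2 ∂μ) ≤ ∫ ω, (X ω - m) ^ 3 ∂μ := by
  have hexpand : ∫ ω, X ω * (X ω - m) ^ 2 ∂μ
      = ∫ ω, (X ω - m) ^ 3 ∂μ + m * ∫ ω, (X ω - m) ^ 2 ∂μ := by
    rw [← integral_const_mul, ← integral_add h3 (h2.const_mul m)]
    congr 1 with ω
    ring
  have hnonneg : 0 ≤ ∫ ω, X ω * (X ω - m) ^ 2 ∂μ :=
    integral_nonneg_of_ae (hX.mono fun ω hω => mul_nonneg hω (sq_nonneg _))
  linarith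

theorem integral_pos_of_integral_sub_integral_sq_pos (hX : 0 ≤ᵐ[μ] X) (hint : Integrable X μ)
    (hvar : 0 < ∫ ω, (X ω - ∫ ω', X ω' ∂μ) ^ 2 ∂μ) : 0 < ∫ ω, X ω ∂μ := by
  refine (integral_nonneg_of_ae hX).lt_of_ne fun hzero => hvar.ne' ?_
  have hX0 : X =ᵐ[μ] 0 := (integral_eq_zero_iff_of_nonneg_ae hX hint).1 hzero.symm
  rw [← hzero]
  exact integral_eq_zero_of_ae (hX0.mono fun ω hω => by simp [hω])

theorem IntegrableOn.integrable_cond {f : Ω → ℝ} {s : Set Ω} (hf : IntegrableOn f s μ) :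
    Integrable f μ[|s] := by
  by_cases hs : μ s = 0
  · rw [cond_eq_zero_of_meas_eq_zero hs]
    exact integrable_zero_measure
  · exact hf.smul_measure (ENNReal.inv_ne_top.2 hs)

end Moments

theorem one_div_mul_intervalIntegral_eq_integral_cond {t : ℝ} (ht : 0 ≤ t) (f : ℝ → ℝ) :
    1 / t * ∫ x in 0..t, f x = ∫ x, f x ∂volume[|Ioc 0 t] := by
  have haverage := interval_average_eq f 0 t
  rw [sub_zero, uIoc_of_le ht, setAverage_eq'] at haverage
  rw [one_div, ← smul_eq_mul, ← haverage]
  rfl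

theorem one_div_two_add_div_bounds {a d : ℝ} (hd : 0 < d) (had : -d ≤ a) :
    (a < 0 → 1 / 2 < 1 / (2 + a / d) ∧ 1 / (2 + a / d) ≤ 1) ∧
    (0 < a → 0 < 1 / (2 + a / d) ∧ 1 / (2 + a / d) < 1 / 2) ∧
    (a = 0 → 1 / (2 + a / d) = 1 / 2) := by
  have hx : -1 ≤ a / d := by rwa [le_div_iff₀ hd, neg_one_mul]
  refine ⟨fun ha => ?_, fun ha => ?_, fun ha => by rw [ha, zero_div, add_zero]⟩
  · have hneg : a / d < 0 := div_neg_of_neg_of_pos ha hd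
    refine ⟨one_div_lt_one_div_of_lt (by linarith) (by linarith), ?_⟩
    rw [div_le_one (by linarith)]
    linarith
  · have hpos : 0 < a / d := div_pos ha hd
    exact ⟨by positivity, one_div_lt_one_div_of_lt (by norm_num) (by linarith)⟩

open MeasureTheory intervalIntegral

theorem stmt_17_general (t_f : ℝ) (ht_f : 0 < t_f) (s : ℝ → ℝ)
    (hs : ∀ t ∈ Set.Icc 0 t_f, 0 ≤ s t)
    (hint1 : IntervalIntegrable s volume 0 t_f)
    (hint2 : IntervalIntegrable (fun t => s t ^ 2) volume 0 t_f)
    (hint3 : IntervalIntegrable (fun t => s t ^ 3) volume 0 t_f) :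
    let m₁ : ℝ := (1 / t_f) * ∫ t in (0:ℝ)..t_f, s t
    let V : ℝ := (1 / t_f) * ∫ t in (0:ℝ)..t_f, (s t - m₁) ^ 2
    let μ₃ : ℝ := (1 / t_f) * ∫ t in (0:ℝ)..t_f, (s t - m₁) ^ 3
    let η : ℝ := 1 / (2 + μ₃ / (V * m₁))
    0 < V →
    ((μ₃ < 0 → 1 / 2 < η ∧ η ≤ 1) ∧
     (0 < μ₃ → 0 < η ∧ η < 1 / 2) ∧
     (μ₃ = 0 → η = 1 / 2)) := by
  intro m₁ V μ₃ η hV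
  have hmean (f : ℝ → ℝ) := one_div_mul_intervalIntegral_eq_integral_cond ht_f.le f
  have hX : 0 ≤ᵐ[volume[|Ioc 0 t_f]] s :=
    ae_cond_of_forall_mem measurableSet_Ioc fun t ht => hs t (Ioc_subset_Icc_self ht)
  have h1 := IntegrableOn.integrable_cond hint1.1
  have h2 := IntegrableOn.integrable_cond hint2.1
  have h3 := IntegrableOn.integrable_cond hint3.1
  have hm₁_pos : 0 < m₁ := by
    have hm₁ : m₁ = ∫ t, s t ∂volume[|Ioc 0 t_f] := hmean s
    have hV' : V = ∫ t, (s t - m₁) ^ 2 ∂volume[|Ioc 0 t_f] := hmean _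
    rw [hV', hm₁] at hV
    rw [hm₁]
    exact integral_pos_of_integral_sub_integral_sq_pos hX h1 hV
  have hkey : -(V * m₁) ≤ μ₃ := by
    have hbound := neg_mul_integral_sub_sq_le_integral_sub_pow_three m₁ hX
      (integrable_sub_const_sq m₁ h1 h2) (integrable_sub_const_pow_three m₁ h1 h2 h3)
    rw [← hmean, ← hmean] at hbound
    linarith
  exact one_div_two_add_div_bounds (mul_pos hV hm₁_pos) hkey

/-- Classification of the efficiency at maximum power `η* = 1/(2 + μ₃/(V m₁))` according
to the sign of the third central moment `μ₃`. -/
theorem stmt_17 (t_f : ℝ) (ht_f : 0 < t_f) (s : ℝ → ℝ)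
    (hmeas : Measurable s) (hs : ∀ t ∈ Set.Icc 0 t_f, 0 ≤ s t)
    (hint1 : IntervalIntegrable s volume 0 t_f)
    (hint2 : IntervalIntegrable (fun t => s t ^ 2) volume 0 t_f)
    (hint3 : IntervalIntegrable (fun t => s t ^ 3) volume 0 t_f) :
    let m₁ : ℝ := (1 / t_f) * ∫ t in (0:ℝ)..t_f, s t
    let V : ℝ := (1 / t_f) * ∫ t in (0:ℝ)..t_f, (s t - m₁) ^ 2
    let μ₃ : ℝ := (1 / t_f) * ∫ t in (0:ℝ)..t_f, (s t - m₁) ^ 3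
    let η : ℝ := 1 / (2 + μ₃ / (V * m₁))
    0 < V →
    ((μ₃ < 0 → 1 / 2 < η ∧ η ≤ 1) ∧
     (0 < μ₃ → 0 < η ∧ η < 1 / 2) ∧
     (μ₃ = 0 → η = 1 / 2)) :=
  stmt_17_general t_f ht_f s hs hint1 hint2 hint3
end
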